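/- Let T be a bounded linear operator on a complex Hilbert space H. Then w²(T) ≤ log((1/2)e^{w(T²)} + (1/2)e^{‖T*T + TT*‖/2}) ≤ (1/2)‖T*T + TT*‖. -/
import Mathlib


open scoped InnerProductSpace
open Set Filter

variable {H : Type*} [NormedAddCommGroup H] [InnerProductSpace ℂ H] [CompleteSpace H]

/-- The numerical radius of a bounded linear operator. -/
noncomputable def numRad (T : H →L[ℂ] H) : ℝ :=
  ⨆ x : {x : H // ‖x‖ = 1}, ‖(⟪T x, x⟫_ℂ)‖

/-- The absolute value `|T| = (T*T)^(1/2)` of a bounded linear operator. -/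
noncomputable def opAbs (T : H →L[ℂ] H) : H →L[ℂ] H := CFC.sqrt (star T * T)

set_option linter.unusedSectionVars false

/-- Buzano's inequality. -/
lemma buzano {e a b : H} (he : ‖e‖ = 1) :
    ‖⟪a, e⟫_ℂ * ⟪e, b⟫_ℂ‖ ≤ (‖a‖ * ‖b‖ + ‖⟪a, b⟫_ℂ‖) / 2 := by
  have hee : ⟪e, e⟫_ℂ = 1 := by
    rw [inner_self_eq_norm_sq_to_K, he]; norm_num
  set a' := a - ⟪e, a⟫_ℂ • e with ha'
  set b' := b - ⟪e, b⟫_ℂ • e with hb'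
  have key : ⟪a', b'⟫_ℂ = ⟪a, b⟫_ℂ - ⟪a, e⟫_ℂ * ⟪e, b⟫_ℂ := by
    simp only [ha', hb', inner_sub_left, inner_sub_right, inner_smul_left,
      inner_smul_right, hee, mul_one, inner_conj_symm]
    ring
  have pyth : ∀ c : H, ‖c - ⟪e, c⟫_ℂ • e‖ ^ 2 = ‖c‖ ^ 2 - ‖⟪e, c⟫_ℂ‖ ^ 2 := by
    intro c
    have horth : ⟪⟪e, c⟫_ℂ • e, c - ⟪e, c⟫_ℂ • e⟫_ℂ = 0 := by
      simp only [inner_sub_right, inner_smul_left, inner_smul_right, hee, mul_one]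
      ring
    have this := norm_add_sq_eq_norm_sq_add_norm_sq_of_inner_eq_zero _ _ horth
    rw [add_sub_cancel] at this
    have hns : ‖⟪e, c⟫_ℂ • e‖ = ‖⟪e, c⟫_ℂ‖ := by rw [norm_smul, he, mul_one]
    rw [hns] at this
    simp only [pow_two]
    linarith
  have hpa := pyth a
  have hpb := pyth b
  have h1 : ‖⟪a, e⟫_ℂ‖ = ‖⟪e, a⟫_ℂ‖ := by rw [← inner_conj_symm]; exact RCLike.norm_conj _
  have htri : 2 * ‖⟪a, e⟫_ℂ * ⟪e, b⟫_ℂ‖ ≤ ‖⟪a, b⟫_ℂ‖ + ‖⟪a, e⟫_ℂ‖ * ‖⟪e, b⟫_ℂ‖ + ‖a'‖ * ‖b'‖ := by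
    have : (2 : ℂ) * (⟪a, e⟫_ℂ * ⟪e, b⟫_ℂ) = ⟪a, b⟫_ℂ + (⟪a, e⟫_ℂ * ⟪e, b⟫_ℂ - ⟪a', b'⟫_ℂ) := by
      rw [key]; ring
    calc 2 * ‖⟪a, e⟫_ℂ * ⟪e, b⟫_ℂ‖ = ‖(2 : ℂ) * (⟪a, e⟫_ℂ * ⟪e, b⟫_ℂ)‖ := by
          rw [norm_mul]; norm_num
      _ = ‖⟪a, b⟫_ℂ + (⟪a, e⟫_ℂ * ⟪e, b⟫_ℂ - ⟪a', b'⟫_ℂ)‖ := by rw [this]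
      _ ≤ ‖⟪a, b⟫_ℂ‖ + ‖⟪a, e⟫_ℂ * ⟪e, b⟫_ℂ - ⟪a', b'⟫_ℂ‖ := norm_add_le _ _
      _ ≤ ‖⟪a, b⟫_ℂ‖ + (‖⟪a, e⟫_ℂ * ⟪e, b⟫_ℂ‖ + ‖⟪a', b'⟫_ℂ‖) := by
          gcongr; exact norm_sub_le _ _
      _ ≤ ‖⟪a, b⟫_ℂ‖ + (‖⟪a, e⟫_ℂ‖ * ‖⟪e, b⟫_ℂ‖ + ‖a'‖ * ‖b'‖) := by
          gcongr
          · rw [norm_mul]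
          · exact norm_inner_le_norm _ _
      _ = _ := by ring
  -- Cauchy-Schwarz in ℝ²
  have hcs : ‖⟪a, e⟫_ℂ‖ * ‖⟪e, b⟫_ℂ‖ + ‖a'‖ * ‖b'‖ ≤ ‖a‖ * ‖b‖ := by
    have hu := norm_nonneg (⟪e, a⟫_ℂ); have hv := norm_nonneg (⟪e, b⟫_ℂ)
    have hu' := norm_nonneg a'; have hv' := norm_nonneg b'
    have hna := norm_nonneg a; have hnb := norm_nonneg b
    rw [h1]
    nlinarith [sq_nonneg (‖⟪e, a⟫_ℂ‖ * ‖b'‖ - ‖⟪e, b⟫_ℂ‖ * ‖a'‖),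
      mul_nonneg hna hnb, sq_nonneg (‖a‖ * ‖b‖ - ‖⟪e, a⟫_ℂ‖ * ‖⟪e, b⟫_ℂ‖ - ‖a'‖ * ‖b'‖),
      sq_nonneg (‖a‖*‖b‖ + ‖⟪e, a⟫_ℂ‖ * ‖⟪e, b⟫_ℂ‖ + ‖a'‖ * ‖b'‖)]
  linarith [htri, hcs]

lemma numRad_nonneg (T : H →L[ℂ] H) : 0 ≤ numRad T :=
  Real.iSup_nonneg fun _ => norm_nonneg _

lemma le_numRad (T : H →L[ℂ] H) {x : H} (hx : ‖x‖ = 1) :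
    ‖⟪T x, x⟫_ℂ‖ ≤ numRad T := by
  refine le_ciSup (f := fun x : {x : H // ‖x‖ = 1} => ‖⟪T x, x⟫_ℂ‖) ⟨‖T‖, ?_⟩ ⟨x, hx⟩
  rintro r ⟨⟨y, hy⟩, rfl⟩
  calc ‖⟪T y, y⟫_ℂ‖ ≤ ‖T y‖ * ‖y‖ := norm_inner_le_norm _ _
    _ ≤ ‖T‖ * ‖y‖ * ‖y‖ := by gcongr; exact T.le_opNorm y
    _ = ‖T‖ := by rw [hy]; ring

lemma numRad_le (T : H →L[ℂ] H) {c : ℝ} (hc : 0 ≤ c)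
    (h : ∀ x : H, ‖x‖ = 1 → ‖⟪T x, x⟫_ℂ‖ ≤ c) : numRad T ≤ c :=
  Real.iSup_le (fun x => h x x.2) hc

theorem stmt18 (T : H →L[ℂ] H) :
    numRad T ^ 2 ≤
      Real.log ((1 / 2) * Real.exp (numRad (T * T)) +
        (1 / 2) * Real.exp (‖star T * T + T * star T‖ / 2)) ∧
    Real.log ((1 / 2) * Real.exp (numRad (T * T)) +
        (1 / 2) * Real.exp (‖star T * T + T * star T‖ / 2)) ≤
      (1 / 2) * ‖star T * T + T * star T‖ := by
  have hTl : ∀ y x : H, ⟪T y, x⟫_ℂ = ⟪y, (star T) x⟫_ℂ := fun y x => by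
    rw [ContinuousLinearMap.star_eq_adjoint]
    exact (ContinuousLinearMap.adjoint_inner_right T y x).symm
  set S : H →L[ℂ] H := star T * T + T * star T with hS
  have hSnn : (0 : ℝ) ≤ ‖S‖ := norm_nonneg _
  -- pointwise: ‖Tx‖² + ‖T*x‖² ≤ ‖S‖ for unit x
  have hSx : ∀ x : H, ‖x‖ = 1 → ‖T x‖ ^ 2 + ‖(star T) x‖ ^ 2 ≤ ‖S‖ := by
    intro x hx
    have h1 : ⟪S x, x⟫_ℂ = (‖T x‖ ^ 2 + ‖(star T) x‖ ^ 2 : ℝ) := by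
      have e1 : ⟪(star T * T) x, x⟫_ℂ = ⟪T x, T x⟫_ℂ := by
        show ⟪(star T) (T x), x⟫_ℂ = _
        rw [ContinuousLinearMap.star_eq_adjoint, ContinuousLinearMap.adjoint_inner_left]
      have e2 : ⟪(T * star T) x, x⟫_ℂ = ⟪(star T) x, (star T) x⟫_ℂ := hTl _ _
      rw [hS, ContinuousLinearMap.add_apply, inner_add_left, e1, e2,
        inner_self_eq_norm_sq_to_K, inner_self_eq_norm_sq_to_K]
      norm_cast
    calc ‖T x‖ ^ 2 + ‖(star T) x‖ ^ 2 = ‖⟪S x, x⟫_ℂ‖ := by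
          rw [h1, Complex.norm_real, Real.norm_of_nonneg (by positivity)]
      _ ≤ ‖S x‖ * ‖x‖ := norm_inner_le_norm _ _
      _ ≤ ‖S‖ * ‖x‖ * ‖x‖ := by gcongr; exact S.le_opNorm x
      _ = ‖S‖ := by rw [hx]; ring
  -- ⟪(T*T)x, x⟫ = ⟪Tx, T*x⟫
  have hT2 : ∀ x : H, ⟪(T * T) x, x⟫_ℂ = ⟪T x, (star T) x⟫_ℂ := by
    intro x
    exact hTl _ _
  set a := numRad (T * T) with haa
  have ha : 0 ≤ a := numRad_nonneg _
  have hab : a ≤ ‖S‖ / 2 := by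
    refine numRad_le _ (by positivity) fun x hx => ?_
    rw [hT2 x]
    calc ‖⟪T x, (star T) x⟫_ℂ‖ ≤ ‖T x‖ * ‖(star T) x‖ := norm_inner_le_norm _ _
      _ ≤ (‖T x‖ ^ 2 + ‖(star T) x‖ ^ 2) / 2 := by nlinarith [sq_nonneg (‖T x‖ - ‖(star T) x‖)]
      _ ≤ ‖S‖ / 2 := by linarith [hSx x hx]
  -- main inequality: numRad T ^ 2 ≤ (a + ‖S‖/2) / 2
  have hmain : numRad T ^ 2 ≤ (a + ‖S‖ / 2) / 2 := by
    have hc : (0 : ℝ) ≤ (a + ‖S‖ / 2) / 2 := by positivity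
    have hb : numRad T ≤ Real.sqrt ((a + ‖S‖ / 2) / 2) := by
      refine numRad_le _ (Real.sqrt_nonneg _) fun x hx => ?_
      have hsq : ‖⟪T x, x⟫_ℂ‖ ^ 2 ≤ (a + ‖S‖ / 2) / 2 := by
        have hx2 : ⟪x, (star T) x⟫_ℂ = ⟪T x, x⟫_ℂ := by
          rw [ContinuousLinearMap.star_eq_adjoint, ContinuousLinearMap.adjoint_inner_right]
        have hbz := buzano (a := T x) (b := (star T) x) hx
        rw [hx2] at hbz
        have hlhs : ‖⟪T x, x⟫_ℂ * ⟪T x, x⟫_ℂ‖ = ‖⟪T x, x⟫_ℂ‖ ^ 2 := by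
          rw [norm_mul]; ring
        rw [hlhs] at hbz
        have h2 : ‖⟪T x, (star T) x⟫_ℂ‖ ≤ a := by rw [haa, ← hT2 x]; exact le_numRad _ hx
        have h3 : ‖T x‖ * ‖(star T) x‖ ≤ ‖S‖ / 2 := by
          nlinarith [sq_nonneg (‖T x‖ - ‖(star T) x‖), hSx x hx]
        linarith
      have := Real.sqrt_le_sqrt hsq
      rwa [Real.sqrt_sq (norm_nonneg _)] at this
    calc numRad T ^ 2 ≤ Real.sqrt ((a + ‖S‖ / 2) / 2) ^ 2 := by
          gcongr
          exact numRad_nonneg _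
      _ = (a + ‖S‖ / 2) / 2 := Real.sq_sqrt hc
  set X := (1 / 2) * Real.exp a + (1 / 2) * Real.exp (‖S‖ / 2) with hX
  have hXpos : 0 < X := by positivity
  constructor
  · -- numRad T ^ 2 ≤ log X
    have hexp : Real.exp ((a + ‖S‖ / 2) / 2) ≤ X := by
      have h1 : Real.exp (a / 2) * Real.exp (a / 2) = Real.exp a := by
        rw [← Real.exp_add]; ring_nf
      have h2 : Real.exp (‖S‖ / 2 / 2) * Real.exp (‖S‖ / 2 / 2) = Real.exp (‖S‖ / 2) := by
        rw [← Real.exp_add]; ring_nf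
      have h3 : Real.exp ((a + ‖S‖ / 2) / 2) = Real.exp (a / 2) * Real.exp (‖S‖ / 2 / 2) := by
        rw [← Real.exp_add]; ring_nf
      rw [hX, h3]
      nlinarith [sq_nonneg (Real.exp (a / 2) - Real.exp (‖S‖ / 2 / 2))]
    have := (Real.le_log_iff_exp_le hXpos).mpr hexp
    linarith [hmain]
  · -- log X ≤ ‖S‖/2
    have hXle : X ≤ Real.exp ((1 / 2) * ‖S‖) := by
      have := Real.exp_le_exp.mpr hab
      rw [hX]
      rw [show (1 / 2) * ‖S‖ = ‖S‖ / 2 by ring]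
      linarith
    calc Real.log X ≤ Real.log (Real.exp ((1 / 2) * ‖S‖)) := Real.log_le_log hXpos hXle
      _ = (1 / 2) * ‖S‖ := Real.log_exp _
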